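/- arXiv:2604.11016 — 3 statements merged into one kernel-verified Lean document; each statement's English description precedes it below -/
import Mathlib

section
/- Let d ≥ 1, let x be a point of the standard probability simplex over Fin d, let ℓ : Fin d → ℝ satisfy ℓ(a) ≥ 0 for all a, and let η ≥ 0. Then ∑_a x(a)·exp(−η·ℓ(a)) ≤ exp( −η·∑_a x(a)·ℓ(a) + η²·∑_a x(a)·ℓ(a)² ). (One-step potential inequality used in the proof of the paper's Lemma 2, obtained from e^{−t} ≤ 1 − t + t² for t ≥ 0 and 1 + s ≤ e^s.) -/
/-!
Bound each `exp (-t)` by the quadratic `1 - t + t ^ 2`, average against `x`, and close with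
`1 + s ≤ exp s`.
-/

open Finset

namespace Real

/-- Since `(1 + t) * (1 - t + t ^ 2) = 1 + t ^ 3 ≥ 1`, this follows from `exp (-t) ≤ 1 / (1 + t)`. -/
theorem exp_neg_le_one_sub_add_sq {t : ℝ} (ht : 0 ≤ t) : exp (-t) ≤ 1 - t + t ^ 2 := by
  have hpos : 0 < 1 + t := by linarith
  calc exp (-t) = (exp t)⁻¹ := exp_neg t
    _ ≤ (1 + t)⁻¹ := inv_anti₀ hpos (by linarith [add_one_le_exp t])
    _ ≤ 1 - t + t ^ 2 := by
      rw [inv_le_iff_one_le_mul₀ hpos]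
      nlinarith [pow_nonneg ht 3]

end Real

theorem sum_mul_exp_neg_le_exp {ι : Type*} [Fintype ι] {x : ι → ℝ} (hx : x ∈ stdSimplex ℝ ι)
    {t : ι → ℝ} (ht : ∀ a, 0 ≤ t a) :
    ∑ a, x a * Real.exp (-t a) ≤ Real.exp (-∑ a, x a * t a + ∑ a, x a * t a ^ 2) :=
  calc ∑ a, x a * Real.exp (-t a) ≤ ∑ a, x a * (1 - t a + t a ^ 2) :=
        sum_le_sum fun a _ ↦
          mul_le_mul_of_nonneg_left (Real.exp_neg_le_one_sub_add_sq (ht a)) (hx.1 a)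
    _ = -∑ a, x a * t a + ∑ a, x a * t a ^ 2 + 1 := by
        simp only [mul_add, mul_sub, mul_one, sum_add_distrib, sum_sub_distrib, hx.2]
        ring
    _ ≤ Real.exp (-∑ a, x a * t a + ∑ a, x a * t a ^ 2) := Real.add_one_le_exp _

theorem stmt_4_general (d : ℕ) (x : Fin d → ℝ) (hx : x ∈ stdSimplex ℝ (Fin d))
    (ℓ : Fin d → ℝ) (hℓ : ∀ a, 0 ≤ ℓ a) (η : ℝ) (hη : 0 ≤ η) :
    ∑ a : Fin d, x a * Real.exp (-η * ℓ a)
      ≤ Real.exp (-η * ∑ a : Fin d, x a * ℓ a + η ^ 2 * ∑ a : Fin d, x a * ℓ a ^ 2) := by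
  have h := sum_mul_exp_neg_le_exp hx (t := fun a ↦ η * ℓ a) fun a ↦ mul_nonneg hη (hℓ a)
  simp only [neg_mul, mul_pow, mul_left_comm (x _), ← mul_sum] at h ⊢
  exact h

/-- One-step potential inequality used in the proof of the paper's Lemma 2. -/
theorem stmt_4 (d : ℕ) (hd : 1 ≤ d) (x : Fin d → ℝ) (hx : x ∈ stdSimplex ℝ (Fin d))
    (ℓ : Fin d → ℝ) (hℓ : ∀ a, 0 ≤ ℓ a) (η : ℝ) (hη : 0 ≤ η) :
    ∑ a : Fin d, x a * Real.exp (-η * ℓ a)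
      ≤ Real.exp (-η * ∑ a : Fin d, x a * ℓ a + η ^ 2 * ∑ a : Fin d, x a * ℓ a ^ 2) :=
  stmt_4_general d x hx ℓ hℓ η hη
end

section
/- Let (Ω, μ) be a probability space, d ≥ 2, N ≥ 1, and σ ∈ ℝ, and set η = √( log d / ((σ² + 1)·N) ). For each n ∈ {1,…,N}, let L̂_n : Ω → (Fin d → ℝ) be a measurable random loss vector with L̂_n(ω)(a) ≥ 0 for all ω and a and each component square-integrable, and let X_n(ω) be defined pointwise by the exponential-weights update with learning rate η applied to the realized losses L̂_1(ω), …, L̂_{n−1}(ω) (with X_1 uniform). Assume for each n: L̂_n is independent of X_n, E[L̂_n(a)] = ℓ_n(a) for a deterministic vector ℓ_n : Fin d → ℝ, and E[L̂_n(a)²] ≤ σ² + 1 for every a. Then for every x* in the standard probability simplex: E[ ∑_{n=1}^N ⟨ℓ_n, X_n⟩ ] − ∑_{n=1}^N ⟨ℓ_n, x*⟩ ≤ 2·√( (σ² + 1)·N·log d ). (Paper's Theorem 1: static regret bound for the OMD-AME algorithm.) -/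
open MeasureTheory ProbabilityTheory

/-- The exponential-weights update with learning rate `η` for the loss vectors
`L 0, L 1, …`:  `expWeights d η L n` is the strategy used at round `n`
(0-indexed, so round `n` here is round `n+1` of the paper), starting from the
uniform distribution, with the multiplicative update driven by `L n`. -/
noncomputable def expWeights (d : ℕ) (η : ℝ) (L : ℕ → Fin d → ℝ) : ℕ → Fin d → ℝ
  | 0 => fun _ => 1 / d
  | n + 1 => fun a =>
      expWeights d η L n a * Real.exp (-η * L n a)
        / ∑ b : Fin d, expWeights d η L n b * Real.exp (-η * L n b)

/-!
Along every sample path the exponential weights are the Gibbs distribution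
`x_n(a) ∝ exp (-η L_n(a))` of the cumulative losses `L_n = ℓ̂_0 + ⋯ + ℓ̂_{n-1}`, and the
potential `W_n = ∑_a exp (-η L_n(a))` satisfies
`W_{n+1} ≤ W_n · exp (η²/2 ⟨x_n, ℓ̂_n²⟩ - η ⟨ℓ̂_n, x_n⟩)`, because
`exp (-s) ≤ 1 - s + s²/2` for `s ≥ 0` and `1 + u ≤ exp u`. Comparing
`exp (-η L_N(a)) ≤ W_N` with `W_0 = d` gives the pathwise regret bound
`log d / η + η/2 ∑_n ⟨x_n, ℓ̂_n²⟩` against every vertex, hence against every point of the simplex.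
As `ℓ̂_n` is independent of `x_n`, taking expectations turns the linear terms into those of the
mean losses `ℓ_n` and bounds each quadratic term by `σ² + 1`; the choice of `η` balances
`log d / η` against `η (σ² + 1) N / 2`.
-/

open Finset Matrix

lemma Real.exp_neg_le_one_sub_add_sq_div_two {t : ℝ} (ht : 0 ≤ t) :
    Real.exp (-t) ≤ 1 - t + t ^ 2 / 2 := by
  let f : ℝ → ℝ := fun y => 1 - y + y ^ 2 / 2 - Real.exp (-y)
  have hf : ∀ y, HasDerivAt f (y - 1 + Real.exp (-y)) y := fun y =>
    ((((hasDerivAt_id y).const_sub 1).add ((hasDerivAt_pow 2 y).div_const 2)).sub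
      (hasDerivAt_neg y).exp).congr_deriv (by push_cast; ring)
  have hmono : Monotone f := monotone_of_deriv_nonneg (fun y => (hf y).differentiableAt)
    fun y => by rw [(hf y).deriv]; linarith [Real.add_one_le_exp (-y)]
  have := hmono ht
  norm_num [f] at this
  linarith

section Simplex

variable {ι : Type*} [Fintype ι] {x v : ι → ℝ} {c : ℝ}

lemma dotProduct_le_of_mem_stdSimplex (hx : x ∈ stdSimplex ℝ ι) (hv : ∀ a, v a ≤ c) :
    x ⬝ᵥ v ≤ c :=
  calc x ⬝ᵥ v ≤ ∑ a, x a * c := sum_le_sum fun a _ => mul_le_mul_of_nonneg_left (hv a) (hx.1 a)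
    _ = c := by rw [← sum_mul, hx.2, one_mul]

lemma le_dotProduct_of_mem_stdSimplex (hx : x ∈ stdSimplex ℝ ι) (hv : ∀ a, c ≤ v a) :
    c ≤ x ⬝ᵥ v :=
  calc c = ∑ a, x a * c := by rw [← sum_mul, hx.2, one_mul]
    _ ≤ x ⬝ᵥ v := sum_le_sum fun a _ => mul_le_mul_of_nonneg_left (hv a) (hx.1 a)

lemma sum_mul_exp_neg_le_of_mem_stdSimplex (hx : x ∈ stdSimplex ℝ ι) (hv : ∀ a, 0 ≤ v a)
    {η : ℝ} (hη : 0 ≤ η) :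
    ∑ a, x a * Real.exp (-η * v a) ≤ Real.exp (η ^ 2 / 2 * (x ⬝ᵥ v ^ 2) - η * (v ⬝ᵥ x)) :=
  calc ∑ a, x a * Real.exp (-η * v a)
      ≤ ∑ a, x a * (1 - η * v a + (η * v a) ^ 2 / 2) :=
        sum_le_sum fun a _ => mul_le_mul_of_nonneg_left (by
          simpa only [neg_mul] using
            Real.exp_neg_le_one_sub_add_sq_div_two (mul_nonneg hη (hv a))) (hx.1 a)
    _ = η ^ 2 / 2 * (x ⬝ᵥ v ^ 2) - η * (v ⬝ᵥ x) + ∑ a, x a := by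
        simp only [dotProduct, Pi.pow_apply, mul_sum, ← sum_sub_distrib, ← sum_add_distrib]
        exact sum_congr rfl fun a _ => by ring
    _ ≤ _ := hx.2 ▸ Real.add_one_le_exp _

end Simplex

section ExpWeights

variable {d : ℕ} (η : ℝ) (L : ℕ → Fin d → ℝ)

def cumLoss (n : ℕ) : Fin d → ℝ := ∑ j ∈ range n, L j

noncomputable def expPotential (n : ℕ) : ℝ := ∑ a, Real.exp (-η * cumLoss L n a)

variable {η L}

lemma exp_cumLoss_succ (n : ℕ) (a : Fin d) :
    Real.exp (-η * cumLoss L (n + 1) a)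
      = Real.exp (-η * cumLoss L n a) * Real.exp (-η * L n a) := by
  simp only [cumLoss, sum_range_succ, Pi.add_apply, mul_add, Real.exp_add]

lemma expPotential_pos (hd : 0 < d) (n : ℕ) : 0 < expPotential η L n :=
  have : Nonempty (Fin d) := ⟨⟨0, hd⟩⟩
  sum_pos (fun _ _ => Real.exp_pos _) univ_nonempty

lemma expWeights_eq_exp_div_expPotential (hd : 0 < d) (n : ℕ) (a : Fin d) :
    expWeights d η L n a = Real.exp (-η * cumLoss L n a) / expPotential η L n := by
  induction n generalizing a with
  | zero => simp [expWeights, cumLoss, expPotential]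
  | succ n ih =>
    have hstep : ∀ b, expWeights d η L n b * Real.exp (-η * L n b)
        = Real.exp (-η * cumLoss L (n + 1) b) / expPotential η L n := fun b => by
      rw [ih, exp_cumLoss_succ, div_mul_eq_mul_div]
    simp only [expWeights, hstep]
    rw [← sum_div, div_div_div_cancel_right₀ (expPotential_pos hd n).ne']
    rfl

lemma expWeights_mem_stdSimplex (hd : 0 < d) (n : ℕ) :
    expWeights d η L n ∈ stdSimplex ℝ (Fin d) := by
  have hP := expPotential_pos (η := η) (L := L) hd n
  refine ⟨fun a => ?_, ?_⟩
  · rw [expWeights_eq_exp_div_expPotential hd]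
    positivity
  · simp_rw [expWeights_eq_exp_div_expPotential hd, ← sum_div]
    exact div_self hP.ne'

lemma expPotential_succ (hd : 0 < d) (n : ℕ) :
    expPotential η L (n + 1)
      = expPotential η L n * ∑ a, expWeights d η L n a * Real.exp (-η * L n a) := by
  rw [mul_sum]
  refine sum_congr rfl fun a _ => ?_
  rw [expWeights_eq_exp_div_expPotential hd, exp_cumLoss_succ]
  field_simp [(expPotential_pos hd n).ne']

lemma expPotential_le (hd : 0 < d) (hη : 0 ≤ η) (hL : ∀ n a, 0 ≤ L n a) (N : ℕ) :
    expPotential η L N ≤ d * Real.exp (∑ n ∈ range N,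
      (η ^ 2 / 2 * (expWeights d η L n ⬝ᵥ L n ^ 2) - η * (L n ⬝ᵥ expWeights d η L n))) := by
  induction N with
  | zero => simp [expPotential, cumLoss]
  | succ N ih =>
    rw [expPotential_succ hd, sum_range_succ, Real.exp_add, ← mul_assoc]
    exact mul_le_mul ih (sum_mul_exp_neg_le_of_mem_stdSimplex
      (expWeights_mem_stdSimplex hd N) (hL N) hη)
      (sum_nonneg fun a _ => mul_nonneg ((expWeights_mem_stdSimplex hd N).1 a)
        (Real.exp_pos _).le) (by positivity)

theorem expWeights_regret_le (hd : 0 < d) (hη : 0 < η) (hL : ∀ n a, 0 ≤ L n a) (N : ℕ)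
    {x : Fin d → ℝ} (hx : x ∈ stdSimplex ℝ (Fin d)) :
    ∑ n ∈ range N, L n ⬝ᵥ expWeights d η L n - ∑ n ∈ range N, L n ⬝ᵥ x
      ≤ Real.log d / η + η / 2 * ∑ n ∈ range N, expWeights d η L n ⬝ᵥ L n ^ 2 := by
  set A := ∑ n ∈ range N, L n ⬝ᵥ expWeights d η L n
  set B := ∑ n ∈ range N, expWeights d η L n ⬝ᵥ L n ^ 2
  have hvertex : ∀ a, A - (Real.log d / η + η / 2 * B) ≤ cumLoss L N a := fun a => by
    have hexp : Real.exp (-η * cumLoss L N a) ≤ d * Real.exp (η ^ 2 / 2 * B - η * A) := by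
      calc Real.exp (-η * cumLoss L N a) ≤ expPotential η L N :=
            single_le_sum (f := fun b => Real.exp (-η * cumLoss L N b))
              (fun _ _ => (Real.exp_pos _).le) (mem_univ a)
        _ ≤ _ := by
          convert expPotential_le hd hη.le hL N using 3
          simp only [A, B, mul_sum, sum_sub_distrib]
    have hlog := Real.log_le_log (Real.exp_pos _) hexp
    rw [Real.log_mul (by positivity) (Real.exp_pos _).ne', Real.log_exp, Real.log_exp] at hlog
    rw [sub_le_iff_le_add]
    refine le_of_mul_le_mul_left ?_ hη
    calc η * A ≤ η * cumLoss L N a + Real.log d + η ^ 2 / 2 * B := by linarith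
      _ = η * (cumLoss L N a + (Real.log d / η + η / 2 * B)) := by field_simp; ring
  rw [← sum_dotProduct, dotProduct_comm, sub_le_comm]
  exact le_dotProduct_of_mem_stdSimplex hx hvertex

end ExpWeights

lemma measurable_expWeights {Ω : Type*} [MeasurableSpace Ω] {d : ℕ} (η : ℝ)
    {L : ℕ → Ω → Fin d → ℝ} (hL : ∀ n, Measurable (L n)) (n : ℕ) :
    Measurable fun ω => expWeights d η (fun j => L j ω) n := by
  induction n with
  | zero => exact measurable_const
  | succ n ih =>
    have hterm : ∀ b, Measurable fun ω =>
        expWeights d η (fun j => L j ω) n b * Real.exp (-η * L n ω b) := fun b =>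
      (measurable_pi_apply b |>.comp ih).mul
        (((measurable_pi_apply b).comp (hL n)).const_mul (-η)).exp
    exact measurable_pi_lambda _ fun a =>
      (hterm a).div (Finset.measurable_sum _ fun b _ => hterm b)

section RandomVectors

lemma integrable_of_integrable_sq {Ω : Type*} [MeasurableSpace Ω] {μ : Measure Ω}
    [IsFiniteMeasure μ] {f : Ω → ℝ} (hf : AEStronglyMeasurable f μ)
    (hsq : Integrable (fun ω => f ω ^ 2) μ) : Integrable f μ :=
  ((memLp_two_iff_integrable_sq hf).2 hsq).integrable one_le_two

variable {Ω ι : Type*} [MeasurableSpace Ω] {μ : Measure Ω} {Y P : Ω → ι → ℝ}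

lemma ProbabilityTheory.IndepFun.integrable_mul_apply (h : IndepFun Y P μ)
    (hY : ∀ a, Integrable (fun ω => Y ω a) μ) (hP : ∀ a, Integrable (fun ω => P ω a) μ) (a : ι) :
    Integrable (fun ω => Y ω a * P ω a) μ :=
  (h.comp (measurable_pi_apply a) (measurable_pi_apply a)).integrable_mul (hY a) (hP a)

lemma ProbabilityTheory.IndepFun.sq_left (h : IndepFun Y P μ) :
    IndepFun (fun ω => Y ω ^ 2) P μ :=
  h.comp (measurable_pi_lambda _ fun a => (measurable_pi_apply a).pow_const 2 :
    Measurable fun v : ι → ℝ => v ^ 2) measurable_id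

variable [Fintype ι]

lemma ProbabilityTheory.IndepFun.integrable_dotProduct (h : IndepFun Y P μ)
    (hY : ∀ a, Integrable (fun ω => Y ω a) μ) (hP : ∀ a, Integrable (fun ω => P ω a) μ) :
    Integrable (fun ω => Y ω ⬝ᵥ P ω) μ :=
  integrable_finsetSum _ fun a _ => h.integrable_mul_apply hY hP a

lemma ProbabilityTheory.IndepFun.integral_dotProduct (h : IndepFun Y P μ)
    (hY : ∀ a, Integrable (fun ω => Y ω a) μ) (hP : ∀ a, Integrable (fun ω => P ω a) μ) :
    ∫ ω, Y ω ⬝ᵥ P ω ∂μ = (fun a => ∫ ω, Y ω a ∂μ) ⬝ᵥ fun a => ∫ ω, P ω a ∂μ := by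
  simp only [dotProduct]
  rw [integral_finsetSum _ fun a _ => h.integrable_mul_apply hY hP a]
  exact sum_congr rfl fun a _ =>
    (h.comp (measurable_pi_apply a) (measurable_pi_apply a)).integral_fun_mul_eq_mul_integral
      (hY a).aestronglyMeasurable (hP a).aestronglyMeasurable

lemma integral_const_dotProduct (hP : ∀ a, Integrable (fun ω => P ω a) μ) (v : ι → ℝ) :
    ∫ ω, v ⬝ᵥ P ω ∂μ = v ⬝ᵥ fun a => ∫ ω, P ω a ∂μ := by
  simp only [dotProduct]
  rw [integral_finsetSum _ fun a _ => (hP a).const_mul (v a)]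
  simp_rw [integral_const_mul]

lemma integrable_apply_of_mem_stdSimplex [IsFiniteMeasure μ] (hP : Measurable P)
    (hmem : ∀ ω, P ω ∈ stdSimplex ℝ ι) (a : ι) : Integrable (fun ω => P ω a) μ :=
  .of_mem_Icc 0 1 ((measurable_pi_apply a).comp hP).aemeasurable
    (ae_of_all _ fun ω => mem_Icc_of_mem_stdSimplex (hmem ω) a)

lemma integral_mem_stdSimplex [IsProbabilityMeasure μ] (hP : Measurable P)
    (hmem : ∀ ω, P ω ∈ stdSimplex ℝ ι) : (fun a => ∫ ω, P ω a ∂μ) ∈ stdSimplex ℝ ι := by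
  refine ⟨fun a => integral_nonneg fun ω => (hmem ω).1 a, ?_⟩
  rw [← integral_finsetSum _ fun a _ => integrable_apply_of_mem_stdSimplex hP hmem a]
  simp [(hmem _).2]

lemma ProbabilityTheory.IndepFun.integral_dotProduct_sub_dotProduct (h : IndepFun Y P μ)
    (hY : ∀ a, Integrable (fun ω => Y ω a) μ) (hP : ∀ a, Integrable (fun ω => P ω a) μ)
    {m : ι → ℝ} (hm : ∀ a, ∫ ω, Y ω a ∂μ = m a) (x : ι → ℝ) :
    ∫ ω, Y ω ⬝ᵥ P ω - Y ω ⬝ᵥ x ∂μ = ∫ ω, m ⬝ᵥ P ω ∂μ - m ⬝ᵥ x := by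
  have hcomparator : ∫ ω, Y ω ⬝ᵥ x ∂μ = m ⬝ᵥ x := by
    simp_rw [dotProduct_comm _ x]
    rw [integral_const_dotProduct hY, funext hm]
  rw [integral_sub (g := fun ω => Y ω ⬝ᵥ x) (h.integrable_dotProduct hY hP)
      (integrable_finsetSum _ fun a _ => (hY a).mul_const (x a)),
    hcomparator, h.integral_dotProduct hY hP, integral_const_dotProduct hP, funext hm]

lemma ProbabilityTheory.IndepFun.integral_dotProduct_sq_le [IsProbabilityMeasure μ]
    (h : IndepFun Y P μ) (hP : Measurable P) (hmem : ∀ ω, P ω ∈ stdSimplex ℝ ι)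
    (hsq : ∀ a, Integrable (fun ω => Y ω a ^ 2) μ) {s : ℝ} (hs : ∀ a, ∫ ω, Y ω a ^ 2 ∂μ ≤ s) :
    ∫ ω, P ω ⬝ᵥ Y ω ^ 2 ∂μ ≤ s := by
  rw [h.sq_left.symm.integral_dotProduct (integrable_apply_of_mem_stdSimplex hP hmem) hsq]
  exact dotProduct_le_of_mem_stdSimplex (integral_mem_stdSimplex hP hmem) hs

end RandomVectors

section Reduction

variable {Ω ι : Type*} [MeasurableSpace Ω] {μ : Measure Ω} [IsProbabilityMeasure μ] [Fintype ι]

theorem integral_regret_le_of_forall_regret_le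
    {L X : ℕ → Ω → ι → ℝ} {ℓ : ℕ → ι → ℝ} {x : ι → ℝ} {N : ℕ} {b c s : ℝ}
    (hLmeas : ∀ n, Measurable (L n)) (hXmeas : ∀ n, Measurable (X n))
    (hXmem : ∀ n ω, X n ω ∈ stdSimplex ℝ ι)
    (hsq : ∀ n a, Integrable (fun ω => L n ω a ^ 2) μ)
    (hindep : ∀ n, IndepFun (L n) (X n) μ)
    (hunbiased : ∀ n a, ∫ ω, L n ω a ∂μ = ℓ n a)
    (hbound : ∀ n a, ∫ ω, L n ω a ^ 2 ∂μ ≤ s) (hb : 0 ≤ b)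
    (hpath : ∀ ω, ∑ n ∈ range N, L n ω ⬝ᵥ X n ω - ∑ n ∈ range N, L n ω ⬝ᵥ x
      ≤ c + b * ∑ n ∈ range N, X n ω ⬝ᵥ L n ω ^ 2) :
    ∫ ω, ∑ n ∈ range N, ℓ n ⬝ᵥ X n ω ∂μ - ∑ n ∈ range N, ℓ n ⬝ᵥ x ≤ c + b * (s * N) := by
  have hLint : ∀ n a, Integrable (fun ω => L n ω a) μ := fun n a =>
    integrable_of_integrable_sq ((measurable_pi_apply a).comp (hLmeas n)).aestronglyMeasurable
      (hsq n a)
  have hXint : ∀ n a, Integrable (fun ω => X n ω a) μ := fun n =>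
    integrable_apply_of_mem_stdSimplex (hXmeas n) (hXmem n)
  have hLXint : ∀ n, Integrable (fun ω => L n ω ⬝ᵥ X n ω - L n ω ⬝ᵥ x) μ := fun n =>
    ((hindep n).integrable_dotProduct (hLint n) (hXint n)).sub
      (integrable_finsetSum _ fun a _ => (hLint n a).mul_const (x a))
  have hXL2int : ∀ n, Integrable (fun ω => X n ω ⬝ᵥ L n ω ^ 2) μ := fun n =>
    (hindep n).sq_left.symm.integrable_dotProduct (hXint n) (hsq n)
  calc ∫ ω, ∑ n ∈ range N, ℓ n ⬝ᵥ X n ω ∂μ - ∑ n ∈ range N, ℓ n ⬝ᵥ x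
      = ∫ ω, ∑ n ∈ range N, (L n ω ⬝ᵥ X n ω - L n ω ⬝ᵥ x) ∂μ := by
        have hℓXint : ∀ n, Integrable (fun ω => ℓ n ⬝ᵥ X n ω) μ := fun n =>
          integrable_finsetSum _ fun a _ => (hXint n a).const_mul (ℓ n a)
        rw [integral_finsetSum _ fun n _ => hℓXint n, ← sum_sub_distrib,
          integral_finsetSum _ fun n _ => hLXint n]
        exact sum_congr rfl fun n _ =>
          ((hindep n).integral_dotProduct_sub_dotProduct (hLint n) (hXint n) (hunbiased n) x).symm
    _ ≤ ∫ ω, c + b * ∑ n ∈ range N, X n ω ⬝ᵥ L n ω ^ 2 ∂μ :=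
        integral_mono (integrable_finsetSum _ fun n _ => hLXint n)
          ((integrable_const c).add ((integrable_finsetSum _ fun n _ => hXL2int n).const_mul b))
          fun ω => by simpa only [sum_sub_distrib] using hpath ω
    _ = c + b * ∑ n ∈ range N, ∫ ω, X n ω ⬝ᵥ L n ω ^ 2 ∂μ := by
        rw [integral_add (integrable_const c)
            ((integrable_finsetSum _ fun n _ => hXL2int n).const_mul b),
          integral_const, integral_const_mul, integral_finsetSum _ fun n _ => hXL2int n]
        simp
    _ ≤ c + b * (s * N) := by
        gcongr
        exact (sum_le_card_nsmul _ _ _ fun n _ =>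
          (hindep n).integral_dotProduct_sq_le (hXmeas n) (hXmem n) (hsq n) (hbound n)).trans_eq
          (by simp [mul_comm])

end Reduction

lemma div_add_mul_le_two_sqrt_mul {K c η : ℝ} (hK : 0 < K) (hc : 0 < c) (hη : η = √(K / c)) :
    K / η + η / 2 * c ≤ 2 * √(c * K) := by
  have hη0 : 0 < η := hη ▸ Real.sqrt_pos.2 (div_pos hK hc)
  have hK' : K = c * η ^ 2 := by
    rw [hη, Real.sq_sqrt (div_pos hK hc).le]
    field_simp
  rw [hK', show c * (c * η ^ 2) = (c * η) ^ 2 by ring, Real.sqrt_sq (by positivity)]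
  field_simp
  nlinarith [mul_pos hc hη0]

/-- Paper's Theorem 1: static regret bound of the OMD-AME algorithm with the
learning rate `η = √(log d / ((σ² + 1) N))`. -/
theorem stmt_9 {Ω : Type*} [MeasurableSpace Ω] (μ : Measure Ω) [IsProbabilityMeasure μ]
    (d N : ℕ) (hd : 2 ≤ d) (hN : 1 ≤ N) (σ η : ℝ)
    (hη : η = Real.sqrt (Real.log d / ((σ ^ 2 + 1) * N)))
    (L : ℕ → Ω → Fin d → ℝ)
    (hmeas : ∀ n, Measurable (L n))
    (hpos : ∀ n ω a, 0 ≤ L n ω a)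
    (hsq : ∀ n a, Integrable (fun ω => (L n ω a) ^ 2) μ)
    (X : ℕ → Ω → Fin d → ℝ)
    (hX : ∀ n ω, X n ω = expWeights d η (fun j => L j ω) n)
    (hindep : ∀ n, IndepFun (L n) (X n) μ)
    (ℓ : ℕ → Fin d → ℝ)
    (hunbiased : ∀ n a, ∫ ω, L n ω a ∂μ = ℓ n a)
    (hbound : ∀ n a, ∫ ω, (L n ω a) ^ 2 ∂μ ≤ σ ^ 2 + 1)
    (xstar : Fin d → ℝ) (hxstar : xstar ∈ stdSimplex ℝ (Fin d)) :
    (∫ ω, ∑ n ∈ Finset.range N, ∑ a : Fin d, ℓ n a * X n ω a ∂μ)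
        - ∑ n ∈ Finset.range N, ∑ a : Fin d, ℓ n a * xstar a
      ≤ 2 * Real.sqrt ((σ ^ 2 + 1) * N * Real.log d) := by
  have hd0 : 0 < d := by omega
  have hlog : 0 < Real.log d := Real.log_pos (by exact_mod_cast hd)
  have hc : 0 < (σ ^ 2 + 1) * N := by
    have : (0 : ℝ) < N := by exact_mod_cast hN
    positivity
  have hη0 : 0 < η := hη ▸ Real.sqrt_pos.2 (div_pos hlog hc)
  obtain rfl : X = fun n ω => expWeights d η (fun j => L j ω) n := funext fun n => funext (hX n)
  calc _ ≤ Real.log d / η + η / 2 * ((σ ^ 2 + 1) * N) :=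
        integral_regret_le_of_forall_regret_le hmeas (measurable_expWeights η hmeas)
          (fun n ω => expWeights_mem_stdSimplex hd0 n) hsq hindep hunbiased hbound
          (by positivity) fun ω => expWeights_regret_le hd0 hη0 (hpos · ω) N hxstar
    _ ≤ _ := div_add_mul_le_two_sqrt_mul hlog hc hη
end

section
/- Let (Ω, μ) be a probability space, p, q ≥ 1. Let M : Ω → Matrix (Fin p) (Fin q) ℝ be a random matrix whose entries are integrable with E[M(a,b)] = U(a,b) for a deterministic matrix U, and let B : Ω → Fin q be a random index with distribution y, i.e., μ{ω : B(ω) = b} = y(b) for all b, such that M and B are independent. Then for every a ∈ Fin p: E[ ω ↦ M(ω)(a, B(ω)) ] = ∑_b U(a,b)·y(b). (Unbiasedness of the action-modeling gradient estimator of the paper's Definition 4: the realized cost-matrix column at the observed opponent action is an unbiased estimator of the true gradient U·y.) -/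
/-!
Split the expectation over the events `{B = b}`. On `{B = b}` the estimator equals `M(a, b)`,
and since `M` is independent of `B`, the integral of `M(a, b)` over `{B = b}` factors as
`μ{B = b} · E[M(a, b)] = y(b) · U(a, b)`.
-/

open MeasureTheory ProbabilityTheory

section

variable {Ω β E : Type*} [MeasurableSpace Ω] {μ : Measure Ω} [MeasurableSpace β]
  [NormedAddCommGroup E] [NormedSpace ℝ E] [MeasurableSpace E] [BorelSpace E]

theorem setIntegral_preimage_eq_smul_of_indepFun {X : Ω → E} {B : Ω → β} {s : Set β}
    (hXB : IndepFun X B μ) (hX : AEStronglyMeasurable X μ) (hB : Measurable B)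
    (hs : MeasurableSet s) :
    ∫ ω in B ⁻¹' s, X ω ∂μ = μ.real (B ⁻¹' s) • ∫ ω, X ω ∂μ := by
  have hind : Measurable (s.indicator (1 : β → ℝ)) := measurable_one.indicator hs
  calc ∫ ω in B ⁻¹' s, X ω ∂μ = ∫ ω, s.indicator 1 (B ω) • X ω ∂μ := by
        rw [← integral_indicator (hB hs)]
        congr with ω
        by_cases hω : B ω ∈ s <;> simp [hω]
    _ = (∫ ω, s.indicator 1 (B ω) ∂μ) • ∫ ω, X ω ∂μ :=
        (hXB.symm.comp hind measurable_id).integral_fun_smul_eq_smul_integral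
          (hind.comp hB).aestronglyMeasurable hX
    _ = μ.real (B ⁻¹' s) • ∫ ω, X ω ∂μ := by
        rw [← integral_indicator_one (hB hs)]
        rfl

theorem integral_apply_eq_sum_of_indepFun {ι : Type*} [Fintype ι] [MeasurableSpace ι]
    [MeasurableSingletonClass ι] {X : Ω → ι → E} {B : Ω → ι}
    (hXB : IndepFun X B μ) (hX : ∀ i, Integrable (fun ω => X ω i) μ) (hB : Measurable B) :
    ∫ ω, X ω (B ω) ∂μ = ∑ i, μ.real (B ⁻¹' {i}) • ∫ ω, X ω i ∂μ := by
  have hpre : ∀ i, MeasurableSet (B ⁻¹' {i}) := fun i => hB (measurableSet_singleton i)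
  have hon : ∀ i, ∫ ω in B ⁻¹' {i}, X ω (B ω) ∂μ = ∫ ω in B ⁻¹' {i}, X ω i ∂μ :=
    fun i => setIntegral_congr_fun (hpre i) fun ω hω => by rw [hω]
  calc ∫ ω, X ω (B ω) ∂μ = ∑ i, ∫ ω in B ⁻¹' {i}, X ω (B ω) ∂μ := by
        rw [← integral_iUnion_fintype hpre, ← Set.preimage_iUnion, Set.iUnion_of_singleton,
          Set.preimage_univ, setIntegral_univ]
        · exact fun i j hij => (Set.disjoint_singleton.2 hij).preimage B
        · exact fun i => ((hX i).integrableOn).congr_fun (fun ω hω => by rw [hω]) (hpre i)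
    _ = ∑ i, μ.real (B ⁻¹' {i}) • ∫ ω, X ω i ∂μ := by
        refine Finset.sum_congr rfl fun i _ => ?_
        rw [hon]
        exact setIntegral_preimage_eq_smul_of_indepFun
          (hXB.comp (measurable_pi_apply i) measurable_id) (hX i).aestronglyMeasurable hB
          (measurableSet_singleton i)

end

theorem stmt_12_general {Ω : Type*} [MeasurableSpace Ω] (μ : Measure Ω) [IsProbabilityMeasure μ]
    (p q : ℕ)
    (M : Ω → Fin p → Fin q → ℝ) (U : Fin p → Fin q → ℝ)
    (hMint : ∀ a b, Integrable (fun ω => M ω a b) μ)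
    (hMunb : ∀ a b, ∫ ω, M ω a b ∂μ = U a b)
    (B : Ω → Fin q) (hBmeas : Measurable B)
    (y : Fin q → ℝ) (hy0 : ∀ b, 0 ≤ y b)
    (hy : ∀ b, μ {ω | B ω = b} = ENNReal.ofReal (y b))
    (hindep : IndepFun M B μ)
    (a : Fin p) :
    ∫ ω, M ω a (B ω) ∂μ = ∑ b : Fin q, U a b * y b := by
  have hMaB : IndepFun (fun ω => M ω a) B μ := hindep.comp (measurable_pi_apply a) measurable_id
  refine (integral_apply_eq_sum_of_indepFun hMaB (hMint a) hBmeas).trans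
    (Finset.sum_congr rfl fun b _ => ?_)
  have hprob : μ.real (B ⁻¹' {b}) = y b := by
    rw [measureReal_def, show B ⁻¹' {b} = {ω | B ω = b} from rfl, hy b,
      ENNReal.toReal_ofReal (hy0 b)]
  rw [hprob, hMunb, smul_eq_mul, mul_comm]

/-- Unbiasedness of the action-modeling gradient estimator (paper's Definition 4):
the realized cost-matrix column at the observed opponent action is an unbiased
estimator of the true gradient `U·y`.  (A `p × q` real matrix is represented as a
function `Fin p → Fin q → ℝ`.) -/
theorem stmt_12 {Ω : Type*} [MeasurableSpace Ω] (μ : Measure Ω) [IsProbabilityMeasure μ]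
    (p q : ℕ) (hp : 1 ≤ p) (hq : 1 ≤ q)
    (M : Ω → Fin p → Fin q → ℝ) (U : Fin p → Fin q → ℝ)
    (hMmeas : Measurable M)
    (hMint : ∀ a b, Integrable (fun ω => M ω a b) μ)
    (hMunb : ∀ a b, ∫ ω, M ω a b ∂μ = U a b)
    (B : Ω → Fin q) (hBmeas : Measurable B)
    (y : Fin q → ℝ) (hy0 : ∀ b, 0 ≤ y b) (hy1 : ∑ b : Fin q, y b = 1)
    (hy : ∀ b, μ {ω | B ω = b} = ENNReal.ofReal (y b))
    (hindep : IndepFun M B μ)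
    (a : Fin p) :
    ∫ ω, M ω a (B ω) ∂μ = ∑ b : Fin q, U a b * y b :=
  stmt_12_general μ p q M U hMint hMunb B hBmeas y hy0 hy hindep a
end
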